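/- Let G and H be ordered abelian groups that are ∃-closed in ordered abelian groups G' and H' respectively. Then the lexicographic sum G ⊕ H is ∃-closed in G' ⊕ H'. -/

import Mathlib

open FirstOrder Language

/-- The language `{+, -, 0, <}` of ordered abelian groups. -/
def oagLang : FirstOrder.Language :=
  { Functions := fun n => match n with | 0 => PUnit | 1 => PUnit | 2 => PUnit | _ => Empty
    Relations := fun n => match n with | 2 => PUnit | _ => Empty }

/-- The canonical `oagLang`-structure on a linearly ordered abelian group. -/
def oagStructure (G : Type*) [AddCommGroup G] [LinearOrder G] [IsOrderedAddMonoid G] : oagLang.Structure G where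
  funMap {n} f x :=
    match n, f with
    | 0, _ => 0
    | 1, _ => -x 0
    | 2, _ => x 0 + x 1
  RelMap {n} r x :=
    match n, r with
    | 2, _ => x 0 < x 1

/-- `IsQN true k φ` says that `φ` is a `Σ_k`-formula and `IsQN false k φ` says that `φ` is a
`Π_k`-formula.  In particular `IsQN true 1` captures existential formulas. -/
inductive IsQN {L : FirstOrder.Language} {α : Type*} :
    Bool → ℕ → {n : ℕ} → L.BoundedFormula α n → Prop
  | of_isQF {b k n} {φ : L.BoundedFormula α n} : φ.IsQF → IsQN b k φ
  | of_flip {b k n} {φ : L.BoundedFormula α n} : IsQN (!b) k φ → IsQN b (k + 1) φ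
  | ex {k n} {φ : L.BoundedFormula α (n + 1)} : IsQN true (k + 1) φ → IsQN true (k + 1) φ.ex
  | all {k n} {φ : L.BoundedFormula α (n + 1)} : IsQN false (k + 1) φ → IsQN false (k + 1) φ.all

/-- A subgroup `H` of a linearly ordered abelian group `G` is `Σ_k`-closed (`b = true`) or
`Π_k`-closed (`b = false`) in `G`. -/
def QNClosedSubgroup {G : Type*} [AddCommGroup G] [LinearOrder G] [IsOrderedAddMonoid G] (H : AddSubgroup G)
    (b : Bool) (k : ℕ) : Prop :=
  ∀ (m : ℕ) (φ : oagLang.Formula (Fin m)), IsQN b k φ → ∀ v : Fin m → H,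
    (letI := oagStructure G; Formula.Realize φ (fun i => (v i : G))) →
    (letI := oagStructure H; Formula.Realize φ v)

/-- The lexicographic sum `G ⊕ H` of two subgroups `G ≤ G'`, `H ≤ H'`, viewed as a subgroup of
the lexicographic sum `G' ⊕ H'` (first coordinate dominating). -/
def lexSum {G' H' : Type*} [AddCommGroup G'] [LinearOrder G'] [IsOrderedAddMonoid G']
    [AddCommGroup H'] [LinearOrder H'] [IsOrderedAddMonoid H']
    (G : AddSubgroup G') (H : AddSubgroup H') : AddSubgroup (Lex (G' × H')) where
  carrier := {x | (ofLex x).1 ∈ G ∧ (ofLex x).2 ∈ H}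
  zero_mem' := ⟨G.zero_mem, H.zero_mem⟩
  add_mem' := fun ha hb => ⟨G.add_mem ha.1 hb.1, H.add_mem ha.2 hb.2⟩
  neg_mem' := fun ha => ⟨G.neg_mem ha.1, H.neg_mem ha.2⟩

/-! An existential formula over `G ⊕ H` is `∃ x̄, ψ(v̄, x̄)` with `ψ` quantifier-free, and the
truth of `ψ` depends only on how the two sides `t, s` of each of its atoms compare. Terms are
additive, so in the lexicographic sum `t` and `s` compare as `compare t₁ s₁` followed by
`compare t₂ s₂`. Given a witness `(a, b)` in `G' ⊕ H'`, the comparison pattern of the first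
coordinates is a quantifier-free condition on `a` over `G`, so by existential closedness it has a
witness `a₀ ∈ G`; likewise `b₀ ∈ H` for the second coordinates. Then `(a₀, b₀)` produces the
same lexicographic comparisons as `(a, b)` and hence satisfies `ψ`. -/

open BoundedFormula

attribute [local instance] oagStructure

namespace oagLang

section Homomorphisms

variable {M N : Type*} [AddCommGroup M] [LinearOrder M] [IsOrderedAddMonoid M]
  [AddCommGroup N] [LinearOrder N] [IsOrderedAddMonoid N]

lemma map_funMap (f : M →+ N) {n : ℕ} (F : oagLang.Functions n) (x : Fin n → M) :
    f (Structure.funMap F x) = Structure.funMap F (f ∘ x) :=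
  match n, F with
  | 0, _ => map_zero f
  | 1, _ => map_neg f (x 0)
  | 2, _ => map_add f (x 0) (x 1)

lemma realize_term_map (f : M →+ N) {α : Type*} (t : oagLang.Term α) (v : α → M) :
    t.realize (f ∘ v) = f (t.realize v) := by
  induction t with
  | var i => rfl
  | func F ts ih => simp only [Term.realize_func, ih, map_funMap]; rfl

def embeddingOfStrictMono (f : M →+ N) (hf : StrictMono f) : M ↪[oagLang] N where
  toFun := f
  inj' := hf.injective
  map_fun' F x := map_funMap f F x
  map_rel' {n} R _ :=
    match n, R with
    | 2, _ => hf.lt_iff_lt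

end Homomorphisms

section Comparisons

variable {α : Type*} {n : ℕ}

def atomPairs : ∀ {n : ℕ}, oagLang.BoundedFormula α n →
    List (oagLang.Term (α ⊕ Fin n) × oagLang.Term (α ⊕ Fin n))
  | _, .falsum => []
  | _, .equal t s => [(t, s)]
  | _, .rel (l := 2) _ ts => [(ts 0, ts 1)]
  | _, .imp φ ψ => atomPairs φ ++ atomPairs ψ
  | _, .all _ => []

def cmpFormula (c : Ordering) (t s : oagLang.Term (α ⊕ Fin n)) : oagLang.BoundedFormula α n :=
  match c with
  | .lt => Relations.boundedFormula₂ (L := oagLang) PUnit.unit t s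
  | .eq => t.bdEqual s
  | .gt => Relations.boundedFormula₂ (L := oagLang) PUnit.unit s t

lemma isQF_cmpFormula (c : Ordering) (t s : oagLang.Term (α ⊕ Fin n)) :
    (cmpFormula c t s).IsQF := by
  cases c
  · exact (IsAtomic.rel _ _).isQF
  · exact (IsAtomic.equal _ _).isQF
  · exact (IsAtomic.rel _ _).isQF

variable {M : Type*} [AddCommGroup M] [LinearOrder M] [IsOrderedAddMonoid M]

lemma realize_cmpFormula (c : Ordering) (t s : oagLang.Term (α ⊕ Fin n)) (v : α → M)
    (xs : Fin n → M) :
    (cmpFormula c t s).Realize v xs ↔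
      compare (t.realize (Sum.elim v xs)) (s.realize (Sum.elim v xs)) = c := by
  cases c
  · exact compare_lt_iff_lt.symm
  · exact compare_eq_iff_eq.symm
  · exact compare_gt_iff_gt.symm

variable {N : Type*} [AddCommGroup N] [LinearOrder N] [IsOrderedAddMonoid N]

lemma realize_iff_of_compare_eq {ψ : oagLang.BoundedFormula α n} (hψ : ψ.IsQF)
    (v : α → M) (xs : Fin n → M) (w : α → N) (ys : Fin n → N)
    (h : ∀ p ∈ atomPairs ψ,
      compare (p.1.realize (Sum.elim v xs)) (p.2.realize (Sum.elim v xs)) =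
        compare (p.1.realize (Sum.elim w ys)) (p.2.realize (Sum.elim w ys))) :
    ψ.Realize v xs ↔ ψ.Realize w ys := by
  induction hψ with
  | falsum => rfl
  | of_isAtomic hat =>
    cases hat with
    | equal t s =>
      simp only [realize_bdEqual]
      rw [← compare_eq_iff_eq, h (t, s) (List.mem_singleton_self _), compare_eq_iff_eq]
    | @rel l R ts =>
      match l, R with
      | 2, R =>
        change _ < _ ↔ _ < _
        rw [← compare_lt_iff_lt, h (ts 0, ts 1) (List.mem_singleton_self _), compare_lt_iff_lt]
  | imp _ _ ih₁ ih₂ =>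
    simp only [realize_imp]
    rw [ih₁ fun p hp => h p (List.mem_append_left _ hp),
      ih₂ fun p hp => h p (List.mem_append_right _ hp)]

def cmpDiagram (l : List (oagLang.Term (α ⊕ Fin n) × oagLang.Term (α ⊕ Fin n)))
    (c : oagLang.Term (α ⊕ Fin n) × oagLang.Term (α ⊕ Fin n) → Ordering) :
    oagLang.BoundedFormula α n :=
  match l with
  | [] => ⊤
  | p :: l => cmpFormula (c p) p.1 p.2 ⊓ cmpDiagram l c

lemma isQF_cmpDiagram (l : List (oagLang.Term (α ⊕ Fin n) × oagLang.Term (α ⊕ Fin n)))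
    (c : oagLang.Term (α ⊕ Fin n) × oagLang.Term (α ⊕ Fin n) → Ordering) :
    (cmpDiagram l c).IsQF := by
  induction l with
  | nil => exact IsQF.top
  | cons p l ih => exact (isQF_cmpFormula _ _ _).inf ih

lemma realize_cmpDiagram (l : List (oagLang.Term (α ⊕ Fin n) × oagLang.Term (α ⊕ Fin n)))
    (c : oagLang.Term (α ⊕ Fin n) × oagLang.Term (α ⊕ Fin n) → Ordering)
    (v : α → M) (xs : Fin n → M) :
    (cmpDiagram l c).Realize v xs ↔
      ∀ p ∈ l, compare (p.1.realize (Sum.elim v xs)) (p.2.realize (Sum.elim v xs)) = c p := by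
  induction l with
  | nil => simp [cmpDiagram]
  | cons p l ih => simp [cmpDiagram, realize_inf, ih, realize_cmpFormula]

end Comparisons

section Lex

variable {G' H' : Type*} [AddCommGroup G'] [LinearOrder G'] [IsOrderedAddMonoid G']
  [AddCommGroup H'] [LinearOrder H'] [IsOrderedAddMonoid H']

lemma compare_realize_lex {α : Type*} (t s : oagLang.Term α) (v : α → G' ×ₗ H') :
    compare (t.realize v) (s.realize v) =
      (compare (t.realize (Prod.fst ∘ ofLex ∘ v)) (s.realize (Prod.fst ∘ ofLex ∘ v))).then
        (compare (t.realize (Prod.snd ∘ ofLex ∘ v)) (s.realize (Prod.snd ∘ ofLex ∘ v))) := by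
  let fst : G' ×ₗ H' →+ G' := (AddMonoidHom.fst G' H').comp (toLexAddEquiv (G' × H')).symm
  let snd : G' ×ₗ H' →+ H' := (AddMonoidHom.snd G' H').comp (toLexAddEquiv (G' × H')).symm
  have realize_eq (u : oagLang.Term α) :
      u.realize v = toLex (u.realize (fst ∘ v), u.realize (snd ∘ v)) := by
    rw [realize_term_map, realize_term_map]; rfl
  rw [realize_eq t, realize_eq s]
  rfl

end Lex

end oagLang

open oagLang

lemma IsQN.exs {L : FirstOrder.Language} {α : Type*} {n : ℕ} {ψ : L.BoundedFormula α n}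
    (hψ : IsQN true 1 ψ) : IsQN true 1 ψ.exs := by
  induction n with
  | zero => exact hψ
  | succ n ih => exact ih hψ.ex

lemma IsQN.isQF_of_zero {L : FirstOrder.Language} {α : Type*} {b : Bool} {n : ℕ}
    {φ : L.BoundedFormula α n} (hφ : IsQN b 0 φ) : φ.IsQF := by
  cases hφ with
  | of_isQF hφ => exact hφ

section Closure

variable {G : Type*} [AddCommGroup G] [LinearOrder G] [IsOrderedAddMonoid G] {H : AddSubgroup G}

lemma exists_realize_of_isQN
    (hH : ∀ {m n : ℕ} {ψ : oagLang.BoundedFormula (Fin m) n}, ψ.IsQF → ∀ (v : Fin m → H)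
      (xs : Fin n → G), ψ.Realize (Subtype.val ∘ v) xs →
        ∃ ys : Fin n → H, ψ.Realize (Subtype.val ∘ v) (Subtype.val ∘ ys))
    {m : ℕ} {b : Bool} {k n : ℕ} {φ : oagLang.BoundedFormula (Fin m) n} (hφ : IsQN b k φ)
    (hb : b = true) (hk : k = 1) (v : Fin m → H) (xs : Fin n → G)
    (h : φ.Realize (Subtype.val ∘ v) xs) : ∃ ys : Fin n → H, φ.Realize v ys := by
  have of_isQF {n : ℕ} {ψ : oagLang.BoundedFormula (Fin m) n} (hψ : ψ.IsQF) (xs : Fin n → G)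
      (h : ψ.Realize (Subtype.val ∘ v) xs) : ∃ ys : Fin n → H, ψ.Realize v ys := by
    obtain ⟨ys, hys⟩ := hH hψ v xs h
    exact ⟨ys, (hψ.realize_embedding (embeddingOfStrictMono H.subtype fun _ _ h => h)).1 hys⟩
  induction hφ with
  | of_isQF hψ => exact of_isQF hψ xs h
  | @of_flip _ k _ _ hψ =>
    obtain rfl : k = 0 := by omega
    exact of_isQF hψ.isQF_of_zero xs h
  | ex _ ih =>
    obtain ⟨z, hz⟩ := realize_ex.1 h
    obtain ⟨ys, hys⟩ := ih hb hk _ hz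
    refine ⟨Fin.init ys, realize_ex.2 ⟨ys (Fin.last _), ?_⟩⟩
    rwa [Fin.snoc_init_self]
  | all => cases hb

theorem qnClosedSubgroup_true_one_iff :
    QNClosedSubgroup H true 1 ↔
      ∀ {m n : ℕ} {ψ : oagLang.BoundedFormula (Fin m) n}, ψ.IsQF → ∀ (v : Fin m → H)
        (xs : Fin n → G), ψ.Realize (Subtype.val ∘ v) xs →
          ∃ ys : Fin n → H, ψ.Realize (Subtype.val ∘ v) (Subtype.val ∘ ys) := by
  refine ⟨fun hH m n ψ hψ v xs h => ?_, fun hH m φ hφ v h => ?_⟩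
  · obtain ⟨ys, hys⟩ := realize_exs.1 <|
      hH m ψ.exs (IsQN.of_isQF hψ).exs v (realize_exs.2 ⟨xs, h⟩)
    exact ⟨ys, (hψ.realize_embedding (embeddingOfStrictMono H.subtype fun _ _ h => h)).2 hys⟩
  · obtain ⟨ys, hys⟩ := exists_realize_of_isQN hH hφ rfl rfl v default h
    rwa [Subsingleton.elim ys default] at hys

end Closure

section LexSum

variable {G' H' : Type*} [AddCommGroup G'] [LinearOrder G'] [IsOrderedAddMonoid G']
  [AddCommGroup H'] [LinearOrder H'] [IsOrderedAddMonoid H'] {G : AddSubgroup G'}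
  {H : AddSubgroup H'}

lemma exists_lexSum_realize (hG : QNClosedSubgroup G true 1) (hH : QNClosedSubgroup H true 1)
    {m n : ℕ} {ψ : oagLang.BoundedFormula (Fin m) n} (hψ : ψ.IsQF) (v : Fin m → lexSum G H)
    (xs : Fin n → G' ×ₗ H') (h : ψ.Realize (Subtype.val ∘ v) xs) :
    ∃ ys : Fin n → lexSum G H, ψ.Realize (Subtype.val ∘ v) (Subtype.val ∘ ys) := by
  let vG : Fin m → G := fun i => ⟨(ofLex (v i).1).1, (v i).2.1⟩
  let vH : Fin m → H := fun i => ⟨(ofLex (v i).1).2, (v i).2.2⟩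
  let cmpG (p : oagLang.Term (Fin m ⊕ Fin n) × oagLang.Term (Fin m ⊕ Fin n)) : Ordering :=
    compare (p.1.realize (Sum.elim (Subtype.val ∘ vG) (Prod.fst ∘ ofLex ∘ xs)))
      (p.2.realize (Sum.elim (Subtype.val ∘ vG) (Prod.fst ∘ ofLex ∘ xs)))
  let cmpH (p : oagLang.Term (Fin m ⊕ Fin n) × oagLang.Term (Fin m ⊕ Fin n)) : Ordering :=
    compare (p.1.realize (Sum.elim (Subtype.val ∘ vH) (Prod.snd ∘ ofLex ∘ xs)))
      (p.2.realize (Sum.elim (Subtype.val ∘ vH) (Prod.snd ∘ ofLex ∘ xs)))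
  obtain ⟨a, ha⟩ := qnClosedSubgroup_true_one_iff.1 hG (isQF_cmpDiagram (atomPairs ψ) cmpG) vG
    (Prod.fst ∘ ofLex ∘ xs) <| (realize_cmpDiagram _ _ _ _).2 fun _ _ => rfl
  obtain ⟨b, hb⟩ := qnClosedSubgroup_true_one_iff.1 hH (isQF_cmpDiagram (atomPairs ψ) cmpH) vH
    (Prod.snd ∘ ofLex ∘ xs) <| (realize_cmpDiagram _ _ _ _).2 fun _ _ => rfl
  refine ⟨fun i => ⟨toLex ((a i : G'), (b i : H')), (a i).2, (b i).2⟩,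
    (realize_iff_of_compare_eq hψ _ _ _ _ fun p hp => ?_).1 h⟩
  simp only [compare_realize_lex, Sum.comp_elim]
  exact congrArg₂ Ordering.then ((realize_cmpDiagram _ _ _ _).1 ha p hp).symm
    ((realize_cmpDiagram _ _ _ _).1 hb p hp).symm

end LexSum

/-- if `G` and `H` are existentially closed subgroups of ordered abelian groups
`G'` and `H'` respectively, then the lexicographic sum `G ⊕ H` is existentially closed in the
lexicographic sum `G' ⊕ H'`. -/
theorem statement11 {G' H' : Type*} [AddCommGroup G'] [LinearOrder G'] [IsOrderedAddMonoid G']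
    [AddCommGroup H'] [LinearOrder H'] [IsOrderedAddMonoid H'] (G : AddSubgroup G') (H : AddSubgroup H')
    (hG : QNClosedSubgroup G true 1) (hH : QNClosedSubgroup H true 1) :
    QNClosedSubgroup (lexSum G H) true 1 :=
  qnClosedSubgroup_true_one_iff.2 fun hψ v xs h => exists_lexSum_realize hG hH hψ v xs h
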